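/- arXiv:1510.04181 — 7 statements merged into one kernel-verified Lean document; each statement's English description precedes it below -/
import Mathlib

section
/- Let r̲, r̄ : ℓ∞^{n-1} → ℝ be 1-Lipschitz with r̲ ≤ r̄ pointwise. Then the map φ : ℓ∞^n → ℓ∞^n, φ(x) = (p([r̲(x̂₁), r̄(x̂₁)], x₁), x₂, …, xₙ), is 1-Lipschitz. -/
open scoped NNReal

namespace LipschitzWith

variable {α ι : Type*} [PseudoEMetricSpace α] {K : ℝ≥0}

protected theorem pi [Fintype ι] {π : ι → Type*} [∀ i, PseudoEMetricSpace (π i)]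
    {f : α → ∀ i, π i} (hf : ∀ i, LipschitzWith K fun a => f a i) : LipschitzWith K f :=
  fun a b => edist_pi_le_iff.2 fun i => hf i a b

theorem fin_cons {n : ℕ} {π : Fin (n + 1) → Type*} [∀ i, PseudoEMetricSpace (π i)]
    {f : α → π 0} {g : α → ∀ i : Fin n, π i.succ}
    (hf : LipschitzWith K f) (hg : LipschitzWith K g) :
    LipschitzWith K fun a => (Fin.cons (f a) (g a) : ∀ i, π i) :=
  LipschitzWith.pi fun i =>
    Fin.cases hf (fun j => ((LipschitzWith.eval j).comp hg).weaken (one_mul K).le) i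

theorem comp_succ {n : ℕ} {β : Type*} [PseudoEMetricSpace β] :
    LipschitzWith 1 fun x : Fin (n + 1) → β => x ∘ Fin.succ :=
  LipschitzWith.pi fun i => LipschitzWith.eval i.succ

end LipschitzWith

theorem phi_lipschitz_general {n : ℕ} (rlo rhi : (Fin n → ℝ) → ℝ)
    (hlo : LipschitzWith 1 rlo) (hhi : LipschitzWith 1 rhi) :
    LipschitzWith 1 (fun x : Fin (n + 1) → ℝ =>
      (Fin.cons (min (max (rlo (x ∘ Fin.succ)) (x 0)) (rhi (x ∘ Fin.succ)))
        (x ∘ Fin.succ) : Fin (n + 1) → ℝ)) := by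
  have htail := LipschitzWith.comp_succ (n := n) (β := ℝ)
  have hhead : LipschitzWith 1 fun x : Fin (n + 1) → ℝ =>
      min (max (rlo (x ∘ Fin.succ)) (x 0)) (rhi (x ∘ Fin.succ)) := by
    simpa using ((hlo.comp htail).max (LipschitzWith.eval 0)).min (hhi.comp htail)
  exact hhead.fin_cons htail

/-- The map `φ(x) = (p([r̲(x̂₁), r̄(x̂₁)], x₁), x₂, …, xₙ)` projecting the first coordinate
onto the interval given by two 1-Lipschitz bounds is 1-Lipschitz on `ℓ∞ⁿ`. -/
theorem phi_lipschitz {n : ℕ} (rlo rhi : (Fin n → ℝ) → ℝ)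
    (hlo : LipschitzWith 1 rlo) (hhi : LipschitzWith 1 rhi)
    (hle : ∀ y : Fin n → ℝ, rlo y ≤ rhi y) :
    LipschitzWith 1 (fun x : Fin (n + 1) → ℝ =>
      (Fin.cons (min (max (rlo (x ∘ Fin.succ)) (x 0)) (rhi (x ∘ Fin.succ)))
        (x ∘ Fin.succ) : Fin (n + 1) → ℝ)) :=
  phi_lipschitz_general rlo rhi hlo hhi
end

section
/- Let r̲, r̄ : ℓ∞^{n-1} → ℝ be 1-Lipschitz with r̲ ≤ r̄ pointwise. Then the set Q = { x ∈ ℓ∞^n | r̲(x̂₁) ≤ x₁ ≤ r̄(x̂₁) } is a nonempty 1-Lipschitz retract of ℓ∞^n, and hence an injective metric space. -/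
/-- A metric space is injective if every 1-Lipschitz map into it from a subset of any
metric space admits a 1-Lipschitz extension. -/
def IsInjective (X : Type*) [MetricSpace X] : Prop :=
  ∀ (B : Type*) (_ : MetricSpace B) (A : Set B) (f : A → X), LipschitzWith 1 f →
    ∃ g : B → X, LipschitzWith 1 g ∧ ∀ a : A, g a = f a

/-!
Clamping the first coordinate, `x ↦ (max r̲(x̂₁) (min x₁ r̄(x̂₁)), x̂₁)`, retracts `ℓ∞ⁿ` onto `Q`
(this uses `r̲ ≤ r̄`), and each coordinate of it is a max/min of 1-Lipschitz functions of `x`, so it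
is 1-Lipschitz for the sup metric. A 1-Lipschitz retract of `ℓ∞ᵐ` is injective: extend a
1-Lipschitz map into it coordinatewise (McShane), then compose with the retraction.
-/

open scoped NNReal

theorem lipschitzWith_pi_iff {α ι : Type*} [PseudoEMetricSpace α] [Fintype ι]
    {β : ι → Type*} [∀ i, PseudoEMetricSpace (β i)] {K : ℝ≥0} {f : α → ∀ i, β i} :
    LipschitzWith K f ↔ ∀ i, LipschitzWith K fun x => f x i :=
  ⟨fun hf i => by rw [← one_mul K]; exact (LipschitzWith.eval i).comp hf,
    fun hf x y => edist_pi_le_iff.2 fun i => hf i x y⟩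

theorem isInjective_of_lipschitzWith_retraction {ι : Type*} [Fintype ι] {Q : Set (ι → ℝ)}
    {φ : (ι → ℝ) → ι → ℝ} (hφ : LipschitzWith 1 φ) (hmaps : ∀ x, φ x ∈ Q)
    (hfix : ∀ x ∈ Q, φ x = x) : IsInjective Q := by
  intro B _ A f hf
  set F : B → ι → ℝ := Function.extend Subtype.val (fun a => (f a : ι → ℝ)) 0
  have hFA : A.domRestrict F = fun a => (f a : ι → ℝ) :=
    funext <| Subtype.val_injective.extend_apply (fun a : A => (f a : ι → ℝ)) 0
  have hF : LipschitzOnWith 1 F A := by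
    rw [lipschitzOnWith_iff_restrict, hFA, ← one_mul 1]
    exact (LipschitzWith.subtype_val Q).comp hf
  obtain ⟨g, hg, hFg⟩ := hF.extend_pi
  refine ⟨fun b => ⟨φ (g b), hmaps _⟩, by
    rw [← one_mul 1]; exact (hφ.comp hg).subtype_mk fun b => hmaps (g b), fun a => ?_⟩
  apply Subtype.ext
  change φ (g a) = f a
  rw [← hFg a.2, ← hfix _ (f a).2]
  exact congrArg φ (congrFun hFA a)

section Slab

variable {n : ℕ} (rlo rhi : (Fin n → ℝ) → ℝ)

/-- The set `Q`, with `x 0` playing `x₁` and `Fin.tail x` playing `x̂₁`. -/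
def slab : Set (Fin (n + 1) → ℝ) := {x | rlo (Fin.tail x) ≤ x 0 ∧ x 0 ≤ rhi (Fin.tail x)}

noncomputable def slabRetraction (x : Fin (n + 1) → ℝ) : Fin (n + 1) → ℝ :=
  Fin.cons (max (rlo (Fin.tail x)) (min (x 0) (rhi (Fin.tail x)))) (Fin.tail x)

variable {rlo rhi}

theorem slabRetraction_mem (hle : ∀ y, rlo y ≤ rhi y) (x : Fin (n + 1) → ℝ) :
    slabRetraction rlo rhi x ∈ slab rlo rhi :=
  ⟨le_max_left _ _, max_le (hle _) (min_le_right _ _)⟩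

theorem slabRetraction_eq_self {x : Fin (n + 1) → ℝ} (hx : x ∈ slab rlo rhi) :
    slabRetraction rlo rhi x = x := by
  rw [slabRetraction, min_eq_left hx.2, max_eq_right hx.1, ← Fin.cons_self_tail x]
  rfl

theorem lipschitzWith_fin_tail :
    LipschitzWith 1 (Fin.tail : (Fin (n + 1) → ℝ) → Fin n → ℝ) :=
  lipschitzWith_pi_iff.2 fun i => LipschitzWith.eval i.succ

theorem lipschitzWith_slabRetraction (hlo : LipschitzWith 1 rlo) (hhi : LipschitzWith 1 rhi) :
    LipschitzWith 1 (slabRetraction rlo rhi) := by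
  refine lipschitzWith_pi_iff.2 fun i => Fin.cases ?_ (fun j => ?_) i
  · simpa [slabRetraction] using (hlo.comp lipschitzWith_fin_tail).max
      ((LipschitzWith.eval 0).min (hhi.comp lipschitzWith_fin_tail))
  · exact lipschitzWith_pi_iff.1 lipschitzWith_fin_tail j

end Slab

/-- The set `Q = { x ∈ ℓ∞ⁿ | r̲(x̂₁) ≤ x₁ ≤ r̄(x̂₁) }` determined by two 1-Lipschitz bounds
is a nonempty 1-Lipschitz retract of `ℓ∞ⁿ`, and hence injective. -/
theorem slab_injective {n : ℕ} (rlo rhi : (Fin n → ℝ) → ℝ)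
    (hlo : LipschitzWith 1 rlo) (hhi : LipschitzWith 1 rhi)
    (hle : ∀ y : Fin n → ℝ, rlo y ≤ rhi y) :
    ({x : Fin (n + 1) → ℝ | rlo (x ∘ Fin.succ) ≤ x 0 ∧ x 0 ≤ rhi (x ∘ Fin.succ)}).Nonempty ∧
    (∃ φ : (Fin (n + 1) → ℝ) → (Fin (n + 1) → ℝ), LipschitzWith 1 φ ∧
      (∀ x, φ x ∈ {x : Fin (n + 1) → ℝ | rlo (x ∘ Fin.succ) ≤ x 0 ∧ x 0 ≤ rhi (x ∘ Fin.succ)}) ∧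
      (∀ x ∈ {x : Fin (n + 1) → ℝ | rlo (x ∘ Fin.succ) ≤ x 0 ∧ x 0 ≤ rhi (x ∘ Fin.succ)}, φ x = x)) ∧
    IsInjective ({x : Fin (n + 1) → ℝ | rlo (x ∘ Fin.succ) ≤ x 0 ∧ x 0 ≤ rhi (x ∘ Fin.succ)}) := by
  have hφ := lipschitzWith_slabRetraction hlo hhi
  exact ⟨⟨_, slabRetraction_mem hle 0⟩,
    ⟨_, hφ, slabRetraction_mem hle, fun _ => slabRetraction_eq_self⟩,
    isInjective_of_lipschitzWith_retraction hφ (slabRetraction_mem hle)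
      fun _ => slabRetraction_eq_self⟩
end

section
/- Let 0 ≤ λ < 1 and for i = 1,…,n let r̲ᵢ, r̄ᵢ : ℓ∞^{n-1} → ℝ be λ-Lipschitz maps with r̲ᵢ ≤ r̄ᵢ pointwise. Then the set Q = { x ∈ ℓ∞^n | r̲ᵢ(x̂ᵢ) ≤ xᵢ ≤ r̄ᵢ(x̂ᵢ) for all i } is nonempty. -/
/-!
Solve every lower inequality with equality: `x ↦ (r̲ᵢ(x̂ᵢ))ᵢ` is a `λ`-contraction of the complete
space `ℓ∞^n`, because deleting a coordinate does not increase the max norm. Its Banach fixed point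
satisfies `xᵢ = r̲ᵢ(x̂ᵢ) ≤ r̄ᵢ(x̂ᵢ)` for every `i`.
-/

open Function

section

variable {α ι κ : Type*} [PseudoEMetricSpace α] [Fintype ι] {K : NNReal}

theorem LipschitzWith.pi_s11 {β : ι → Type*} [∀ i, PseudoEMetricSpace (β i)] {f : α → ∀ i, β i}
    (hf : ∀ i, LipschitzWith K fun x => f x i) : LipschitzWith K f :=
  fun x y => edist_pi_le_iff.2 fun i => hf i x y

theorem lipschitzWith_one_comp_right [Fintype κ] (e : κ → ι) :
    LipschitzWith 1 fun x : ι → α => x ∘ e :=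
  LipschitzWith.pi_s11 fun j => LipschitzWith.eval (e j)

theorem LipschitzWith.pi_comp_right [Fintype κ] {β : Type*} [PseudoEMetricSpace β]
    {g : ι → (κ → α) → β} (hg : ∀ i, LipschitzWith K (g i)) (e : ι → κ → ι) :
    LipschitzWith K fun (x : ι → α) i => g i (x ∘ e i) :=
  LipschitzWith.pi_s11 fun i => by
    simpa [comp_def] using (hg i).comp (lipschitzWith_one_comp_right (e i))

end

theorem system_solvable_general {n : ℕ} (lam : NNReal) (hlam : lam < 1)
    (rlo rhi : Fin (n + 1) → (Fin n → ℝ) → ℝ)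
    (hlo : ∀ i, LipschitzWith lam (rlo i))
    (hle : ∀ i (y : Fin n → ℝ), rlo i y ≤ rhi i y) :
    ∃ x : Fin (n + 1) → ℝ, ∀ i : Fin (n + 1),
      rlo i (x ∘ i.succAbove) ≤ x i ∧ x i ≤ rhi i (x ∘ i.succAbove) := by
  have hF : ContractingWith lam fun (x : Fin (n + 1) → ℝ) i => rlo i (x ∘ i.succAbove) :=
    ⟨hlam, LipschitzWith.pi_comp_right hlo Fin.succAbove⟩
  set x := ContractingWith.fixedPoint _ hF
  refine ⟨x, fun i => ?_⟩
  have hfix : rlo i (x ∘ i.succAbove) = x i := congrFun hF.fixedPoint_isFixedPt i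
  exact ⟨hfix.le, hfix ▸ hle i _⟩

/-- If all bounds `r̲ᵢ ≤ r̄ᵢ` are `λ`-Lipschitz with `λ < 1`, the system of inequalities
`r̲ᵢ(x̂ᵢ) ≤ xᵢ ≤ r̄ᵢ(x̂ᵢ)` (for all `i`) is solvable. -/
theorem system_solvable {n : ℕ} (lam : NNReal) (hlam : lam < 1)
    (rlo rhi : Fin (n + 1) → (Fin n → ℝ) → ℝ)
    (hlo : ∀ i, LipschitzWith lam (rlo i)) (hhi : ∀ i, LipschitzWith lam (rhi i))
    (hle : ∀ i (y : Fin n → ℝ), rlo i y ≤ rhi i y) :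
    ∃ x : Fin (n + 1) → ℝ, ∀ i : Fin (n + 1),
      rlo i (x ∘ i.succAbove) ≤ x i ∧ x i ≤ rhi i (x ∘ i.succAbove) :=
  system_solvable_general lam hlam rlo rhi hlo hle
end

section
/- Let 0 ≤ λ < 1 and for i = 1,…,n let r̲ᵢ, r̄ᵢ : ℓ∞^{n-1} → ℝ be λ-Lipschitz with r̲ᵢ ≤ r̄ᵢ. Then Q = { x ∈ ℓ∞^n | r̲ᵢ(x̂ᵢ) ≤ xᵢ ≤ r̄ᵢ(x̂ᵢ) for all i } is a 1-Lipschitz retract of ℓ∞^n: there exists a 1-Lipschitz map Φ : ℓ∞^n → ℓ∞^n with Φ(x) ∈ Q for all x and Φ(x) = x for x ∈ Q. -/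
/-!
For fixed `x`, the map `y ↦ (clamp of xᵢ to [r̲ᵢ(ŷᵢ), r̄ᵢ(ŷᵢ)])ᵢ` is a `λ`-contraction of `ℓ∞ⁿ`,
and `Φ x` is taken to be its fixed point; the conditions defining `Q` say exactly that `x` is a
fixed point of its own map, so `Φ` is a retraction onto `Q`. Clamping is 1-Lipschitz jointly in
the point and the two endpoints, so `d(Φ x, Φ x') ≤ max (λ d(Φ x, Φ x')) (d(x, x'))`,
and `λ < 1` forces `d(Φ x, Φ x') ≤ d(x, x')`.
-/

open NNReal

lemma dist_max_min_le (a a' b b' s t : ℝ) :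
    dist (max a (min s b)) (max a' (min t b')) ≤ max (max (dist a a') (dist b b')) (dist s t) := by
  simp only [Real.dist_eq]
  calc |max a (min s b) - max a' (min t b')|
      ≤ max |a - a'| |min s b - min t b'| := abs_max_sub_max_le_max _ _ _ _
    _ ≤ max |a - a'| (max |s - t| |b - b'|) :=
        max_le_max le_rfl (abs_min_sub_min_le_max _ _ _ _)
    _ ≤ max (max |a - a'| |b - b'|) |s - t| :=
        max_le (le_max_of_le_left (le_max_left _ _))
          (max_le (le_max_right _ _) (le_max_of_le_left (le_max_right _ _)))

lemma le_of_le_max_mul_self {c d e : ℝ} (hc : c < 1) (he : 0 ≤ e)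
    (h : d ≤ max (c * d) e) : d ≤ e := by
  rcases le_max_iff.1 h with h | h
  · nlinarith
  · exact h

lemma LipschitzWith.comp_right {ι κ α : Type*} [Fintype ι] [Fintype κ] [PseudoEMetricSpace α]
    (σ : κ → ι) : LipschitzWith 1 fun y : ι → α => y ∘ σ :=
  LipschitzWith.of_edist_le fun y y' => edist_pi_le_iff.2 fun k => edist_le_pi_edist y y' (σ k)

namespace ClampSystem

variable {ι : Type*} (lo hi : ι → (ι → ℝ) → ℝ)

/-- The projections `φᵢ` applied simultaneously rather than cyclically, with the bounds read off `y`;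
its fixed point replaces the limit of the cyclic compositions. -/
def clampStep (x y : ι → ℝ) : ι → ℝ :=
  fun i => max (lo i y) (min (x i) (hi i y))

lemma clampStep_self {x : ι → ℝ} (hx : ∀ i, lo i x ≤ x i ∧ x i ≤ hi i x) :
    clampStep lo hi x x = x :=
  funext fun i => by rw [clampStep, min_eq_left (hx i).2, max_eq_right (hx i).1]

lemma bounds_of_clampStep_eq {x y : ι → ℝ} (hle : ∀ i, lo i y ≤ hi i y)
    (hy : clampStep lo hi x y = y) (i : ι) : lo i y ≤ y i ∧ y i ≤ hi i y := by
  rw [← congrFun hy i]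
  exact ⟨le_max_left _ _, max_le (hle i) (min_le_right _ _)⟩

variable [Fintype ι] {lo hi} {lam : ℝ≥0}

lemma dist_clampStep_le (hlo : ∀ i, LipschitzWith lam (lo i)) (hhi : ∀ i, LipschitzWith lam (hi i))
    (x x' y y' : ι → ℝ) :
    dist (clampStep lo hi x y) (clampStep lo hi x' y') ≤ max (lam * dist y y') (dist x x') := by
  refine (dist_pi_le_iff (le_max_of_le_right dist_nonneg)).2 fun i => ?_
  refine (dist_max_min_le _ _ _ _ _ _).trans ?_
  exact max_le_max (max_le ((hlo i).dist_le_mul y y') ((hhi i).dist_le_mul y y'))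
    (dist_le_pi_dist x x' i)

lemma contractingWith_clampStep (hlam : lam < 1) (hlo : ∀ i, LipschitzWith lam (lo i))
    (hhi : ∀ i, LipschitzWith lam (hi i)) (x : ι → ℝ) :
    ContractingWith lam (clampStep lo hi x) := by
  refine ⟨hlam, LipschitzWith.of_dist_le_mul fun y y' => ?_⟩
  simpa [dist_self, max_eq_left (by positivity : (0 : ℝ) ≤ lam * dist y y')] using
    dist_clampStep_le hlo hhi x x y y'

theorem exists_lipschitzWith_one_retraction (hlam : lam < 1)
    (hlo : ∀ i, LipschitzWith lam (lo i)) (hhi : ∀ i, LipschitzWith lam (hi i))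
    (hle : ∀ i y, lo i y ≤ hi i y) :
    ∃ Φ : (ι → ℝ) → (ι → ℝ), LipschitzWith 1 Φ ∧
      (∀ x i, lo i (Φ x) ≤ Φ x i ∧ Φ x i ≤ hi i (Φ x)) ∧
      ∀ x, (∀ i, lo i x ≤ x i ∧ x i ≤ hi i x) → Φ x = x := by
  have hF := contractingWith_clampStep hlam hlo hhi
  let Φ x := ContractingWith.fixedPoint (clampStep lo hi x) (hF x)
  have hfix x : clampStep lo hi x (Φ x) = Φ x := (hF x).fixedPoint_isFixedPt
  refine ⟨Φ, LipschitzWith.of_dist_le_mul fun x x' => ?_, fun x => bounds_of_clampStep_eq lo hi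
    (fun i => hle i _) (hfix x), fun x hx => ((hF x).fixedPoint_unique (clampStep_self lo hi hx)).symm⟩
  have hstep := dist_clampStep_le hlo hhi x x' (Φ x) (Φ x')
  rw [hfix, hfix] at hstep
  rw [NNReal.coe_one, one_mul]
  exact le_of_le_max_mul_self hlam dist_nonneg hstep

end ClampSystem

/-- If all bounds `r̲ᵢ ≤ r̄ᵢ` are `λ`-Lipschitz with `λ < 1`, then
`Q = { x | r̲ᵢ(x̂ᵢ) ≤ xᵢ ≤ r̄ᵢ(x̂ᵢ) for all i }` is a 1-Lipschitz retract of `ℓ∞ⁿ`. -/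
theorem system_retract {n : ℕ} (lam : NNReal) (hlam : lam < 1)
    (rlo rhi : Fin (n + 1) → (Fin n → ℝ) → ℝ)
    (hlo : ∀ i, LipschitzWith lam (rlo i)) (hhi : ∀ i, LipschitzWith lam (rhi i))
    (hle : ∀ i (y : Fin n → ℝ), rlo i y ≤ rhi i y) :
    ∃ Φ : (Fin (n + 1) → ℝ) → (Fin (n + 1) → ℝ), LipschitzWith 1 Φ ∧
      (∀ x, Φ x ∈ {x : Fin (n + 1) → ℝ | ∀ i : Fin (n + 1),
        rlo i (x ∘ i.succAbove) ≤ x i ∧ x i ≤ rhi i (x ∘ i.succAbove)}) ∧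
      (∀ x ∈ {x : Fin (n + 1) → ℝ | ∀ i : Fin (n + 1),
        rlo i (x ∘ i.succAbove) ≤ x i ∧ x i ≤ rhi i (x ∘ i.succAbove)}, Φ x = x) := by
  have hhat (r : Fin (n + 1) → (Fin n → ℝ) → ℝ) (hr : ∀ i, LipschitzWith lam (r i)) (i : Fin (n + 1)) :
      LipschitzWith lam fun x : Fin (n + 1) → ℝ => r i (x ∘ i.succAbove) := by
    have h := (hr i).comp (LipschitzWith.comp_right i.succAbove)
    rwa [mul_one] at h
  exact ClampSystem.exists_lipschitzWith_one_retraction hlam (hhat rlo hlo) (hhat rhi hhi)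
    (fun i _ => hle i _)
end

section
/- With λ < 1 and the cyclic iteration Φ_m = φ_{[m]} ∘ Φ_{m-1} of the coordinate projections φᵢ (where [m] = ((m−1) mod n) + 1), the increments d_m = ‖Φ_m(x) − Φ_{m−1}(x)‖ satisfy, for all m > n: |d_m| ≤ λ · max{|d_{m−n+1}|, …, |d_{m−1}|}. -/
/-!
Let `i = [m]` and `N = n + 1`. Coordinate `i` was last projected at step `m - N`, onto the
interval computed from `Φ_{m-N-1} x`, and has not moved since, so it still lies in that interval.
Step `m` projects it onto the interval computed from `Φ_{m-1} x`; since the endpoints are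
`λ`-Lipschitz, it moves by at most `λ` times the distance between the two points off coordinate
`i`. In between, each coordinate `j ≠ i` was changed in exactly one step of the window
`m - N + 1, …, m - 1`, which bounds that distance by the largest increment in the window.
-/

/-- The single-coordinate projection `φᵢ`: replace the `i`-th coordinate of `x` by its
projection onto the interval `[r̲ᵢ(x̂ᵢ), r̄ᵢ(x̂ᵢ)]`, leaving the other coordinates fixed. -/
def coordProj {n : ℕ} (rlo rhi : Fin (n + 1) → (Fin n → ℝ) → ℝ)
    (i : Fin (n + 1)) (x : Fin (n + 1) → ℝ) : Fin (n + 1) → ℝ :=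
  Function.update x i (min (max (rlo i (x ∘ i.succAbove)) (x i)) (rhi i (x ∘ i.succAbove)))

/-- The cyclic iteration `Φ_m = φ_{[m]} ∘ Φ_{m-1}` with `Φ₀ = id`, where
`[m] = ((m-1) mod (n+1)) + 1` (0-indexed: `(m-1) mod (n+1)`). -/
def cyclicIter {n : ℕ} (rlo rhi : Fin (n + 1) → (Fin n → ℝ) → ℝ) :
    ℕ → (Fin (n + 1) → ℝ) → (Fin (n + 1) → ℝ)
  | 0 => id
  | m + 1 => coordProj rlo rhi ⟨m % (n + 1), Nat.mod_lt m (Nat.succ_pos n)⟩ ∘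
      cyclicIter rlo rhi m

theorem abs_min_max_sub_le {α : Type*} [AddCommGroup α] [LinearOrder α] [IsOrderedAddMonoid α]
    {a b a' b' t : α} (ht : t ∈ Set.Icc a' b') :
    |min (max a t) b - t| ≤ max |a - a'| |b - b'| := by
  calc |min (max a t) b - t| = |min (max a t) b - min (max a' t) b'| := by
        rw [max_eq_right ht.1, min_eq_left ht.2]
    _ ≤ max |max a t - max a' t| |b - b'| := abs_min_sub_min_le_max _ _ _ _
    _ ≤ max |a - a'| |b - b'| :=
        max_le_max (by simpa using abs_max_sub_max_le_max a t a' t) le_rfl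

theorem Nat.mod_ne_mod_of_lt_of_lt_add {N k l : ℕ} (hkl : k < l) (hlk : l < k + N) :
    k % N ≠ l % N := fun h => hkl.ne <|
  Nat.ModEq.eq_of_abs_lt h (abs_lt.mpr ⟨by omega, by omega⟩)

theorem Nat.exists_mem_Ico_mod_eq {N j : ℕ} (a : ℕ) (hj : j < N) :
    ∃ k ∈ Finset.Ico a (a + N), k % N = j := by
  have ha : a % N < N := Nat.mod_lt a (by omega)
  refine ⟨a + (j + N - a % N) % N, Finset.mem_Ico.mpr ⟨by omega, ?_⟩, ?_⟩
  · have := Nat.mod_lt (j + N - a % N) (by omega : 0 < N)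
    omega
  · have := Nat.div_add_mod a N
    rw [Nat.add_mod_mod, show a + (j + N - a % N) = j + N + N * (a / N) by omega,
      Nat.add_mul_mod_self_left, Nat.add_mod_right, Nat.mod_eq_of_lt hj]

/-- `cyclicIndex n (m - 1)` is the paper's `[m]`, shifted to `Fin (n + 1)`. -/
def cyclicIndex (n k : ℕ) : Fin (n + 1) := ⟨k % (n + 1), Nat.mod_lt k n.succ_pos⟩

theorem cyclicIndex_add_right (n k : ℕ) : cyclicIndex n (k + (n + 1)) = cyclicIndex n k :=
  Fin.ext (Nat.add_mod_right k (n + 1))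

section CyclicIter

variable {n : ℕ} (rlo rhi : Fin (n + 1) → (Fin n → ℝ) → ℝ) (x : Fin (n + 1) → ℝ)

theorem dist_coordProj_le {lam : NNReal} {i : Fin (n + 1)}
    (hlo : LipschitzWith lam (rlo i)) (hhi : LipschitzWith lam (rhi i)) {y z : Fin (n + 1) → ℝ}
    (hy : y i ∈ Set.Icc (rlo i (z ∘ i.succAbove)) (rhi i (z ∘ i.succAbove))) :
    dist (coordProj rlo rhi i y) y ≤ lam * dist (y ∘ i.succAbove) (z ∘ i.succAbove) := by
  refine (dist_pi_le_iff (by positivity)).mpr fun j => ?_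
  rcases eq_or_ne j i with rfl | hj
  · rw [coordProj, Function.update_self, Real.dist_eq]
    refine (abs_min_max_sub_le hy).trans (max_le ?_ ?_)
    · exact (Real.dist_eq _ _).symm.trans_le (hlo.dist_le_mul _ _)
    · exact (Real.dist_eq _ _).symm.trans_le (hhi.dist_le_mul _ _)
  · rw [coordProj, Function.update_of_ne hj, dist_self]
    positivity

theorem cyclicIter_succ (k : ℕ) :
    cyclicIter rlo rhi (k + 1) x = coordProj rlo rhi (cyclicIndex n k) (cyclicIter rlo rhi k x) :=
  rfl

theorem cyclicIter_apply_eq_of_forall_ne {j : Fin (n + 1)} {a b : ℕ} (hab : a ≤ b)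
    (h : ∀ k ∈ Finset.Ico a b, cyclicIndex n k ≠ j) :
    cyclicIter rlo rhi b x j = cyclicIter rlo rhi a x j := by
  induction b, hab using Nat.le_induction with
  | base => rfl
  | succ b hab ih =>
    rw [cyclicIter_succ, coordProj, Function.update_of_ne
      (h b (Finset.mem_Ico.mpr ⟨hab, b.lt_succ_self⟩)).symm]
    exact ih fun k hk => h k (Finset.Ico_subset_Ico_right b.le_succ hk)

theorem cyclicIndex_ne_of_lt_of_lt_add {k l : ℕ} (hkl : k < l) (hlk : l < k + (n + 1)) :
    cyclicIndex n k ≠ cyclicIndex n l :=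
  fun h => Nat.mod_ne_mod_of_lt_of_lt_add hkl hlk (congrArg Fin.val h)

theorem cyclicIter_apply_cyclicIndex_of_le_add {a k : ℕ} (hak : a ≤ k) (hka : k < a + (n + 1)) :
    cyclicIter rlo rhi k x (cyclicIndex n k) = cyclicIter rlo rhi a x (cyclicIndex n k) :=
  cyclicIter_apply_eq_of_forall_ne rlo rhi x hak fun l hl =>
    cyclicIndex_ne_of_lt_of_lt_add (Finset.mem_Ico.mp hl).2 (by have := Finset.mem_Ico.mp hl; omega)

theorem cyclicIter_apply_cyclicIndex_of_lt_of_le_add {k b : ℕ} (hkb : k < b)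
    (hbk : b ≤ k + (n + 1)) :
    cyclicIter rlo rhi b x (cyclicIndex n k) = cyclicIter rlo rhi (k + 1) x (cyclicIndex n k) :=
  cyclicIter_apply_eq_of_forall_ne rlo rhi x hkb fun l hl =>
    (cyclicIndex_ne_of_lt_of_lt_add (Finset.mem_Ico.mp hl).1 (by
      have := Finset.mem_Ico.mp hl; omega)).symm

theorem cyclicIter_apply_mem_Icc (hle : ∀ i (y : Fin n → ℝ), rlo i y ≤ rhi i y) {k b : ℕ}
    (hkb : k < b) (hbk : b ≤ k + (n + 1)) :
    cyclicIter rlo rhi b x (cyclicIndex n k) ∈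
      Set.Icc (rlo (cyclicIndex n k) (cyclicIter rlo rhi k x ∘ (cyclicIndex n k).succAbove))
        (rhi (cyclicIndex n k) (cyclicIter rlo rhi k x ∘ (cyclicIndex n k).succAbove)) := by
  rw [cyclicIter_apply_cyclicIndex_of_lt_of_le_add rlo rhi x hkb hbk, cyclicIter_succ, coordProj,
    Function.update_self]
  exact ⟨le_min (le_max_left _ _) (hle _ _), min_le_right _ _⟩

theorem exists_dist_cyclicIter_apply_le {k : ℕ} (hk : n + 1 ≤ k) {j : Fin (n + 1)}
    (hj : j ≠ cyclicIndex n k) : ∃ l ∈ Finset.Ico (k - n) k,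
      dist (cyclicIter rlo rhi k x j) (cyclicIter rlo rhi (k - (n + 1)) x j) ≤
        dist (cyclicIter rlo rhi (l + 1) x) (cyclicIter rlo rhi l x) := by
  -- the only step of the cycle that changes coordinate `j`
  obtain ⟨l, hl, hlj⟩ := Nat.exists_mem_Ico_mod_eq (k - n) j.isLt
  have hlj : cyclicIndex n l = j := Fin.ext hlj
  rw [Finset.mem_Ico] at hl
  have hlk : l ≠ k := by rintro rfl; exact hj hlj.symm
  refine ⟨l, Finset.mem_Ico.mpr ⟨hl.1, by omega⟩, ?_⟩
  subst hlj
  rw [cyclicIter_apply_cyclicIndex_of_lt_of_le_add rlo rhi x (by omega) (by omega),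
    ← cyclicIter_apply_cyclicIndex_of_le_add rlo rhi x (a := k - (n + 1)) (by omega) (by omega)]
  exact dist_le_pi_dist _ _ _

end CyclicIter

/-- With `λ < 1` and `N = n + 1` coordinates, the increments
`d_m = ‖Φ_m(x) − Φ_{m−1}(x)‖` satisfy, for `m > N`,
`d_m ≤ λ · max{d_{m−N+1}, …, d_{m−1}}`. -/
theorem cyclicIter_increment_bound {n : ℕ} (hn : 0 < n) (lam : NNReal)
    (rlo rhi : Fin (n + 1) → (Fin n → ℝ) → ℝ)
    (hlo : ∀ i, LipschitzWith lam (rlo i)) (hhi : ∀ i, LipschitzWith lam (rhi i))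
    (hle : ∀ i (y : Fin n → ℝ), rlo i y ≤ rhi i y)
    (x : Fin (n + 1) → ℝ) (m : ℕ) (hm : n + 1 < m) :
    dist (cyclicIter rlo rhi m x) (cyclicIter rlo rhi (m - 1) x) ≤
      lam * (Finset.Ico (m - (n + 1) + 1) m).sup'
        (Finset.nonempty_Ico.mpr (by omega))
        (fun k => dist (cyclicIter rlo rhi k x) (cyclicIter rlo rhi (k - 1) x)) := by
  obtain ⟨k, rfl⟩ : ∃ k, m = k + 1 := ⟨m - 1, by omega⟩
  set S := (Finset.Ico (k + 1 - (n + 1) + 1) (k + 1)).sup' _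
    (fun k => dist (cyclicIter rlo rhi k x) (cyclicIter rlo rhi (k - 1) x))
  have hS : ∀ l ∈ Finset.Ico (k - n) k,
      dist (cyclicIter rlo rhi (l + 1) x) (cyclicIter rlo rhi l x) ≤ S := fun l hl =>
    Finset.le_sup'_of_le _ (b := l + 1) (by simp only [Finset.mem_Ico] at hl ⊢; omega) le_rfl
  have hS0 : 0 ≤ S := dist_nonneg.trans (hS (k - 1) (Finset.mem_Ico.mpr ⟨by omega, by omega⟩))
  set i := cyclicIndex n k
  have hi : cyclicIndex n (k - (n + 1)) = i := by
    rw [← cyclicIndex_add_right, Nat.sub_add_cancel (by omega)]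
  have hcycle : dist (cyclicIter rlo rhi k x ∘ i.succAbove)
      (cyclicIter rlo rhi (k - (n + 1)) x ∘ i.succAbove) ≤ S :=
    (dist_pi_le_iff hS0).mpr fun j => by
      obtain ⟨l, hl, hdist⟩ :=
        exists_dist_cyclicIter_apply_le rlo rhi x (by omega) (Fin.succAbove_ne i j)
      exact hdist.trans (hS l hl)
  have hIcc := cyclicIter_apply_mem_Icc rlo rhi x hle (k := k - (n + 1)) (b := k) (by omega)
    (by omega)
  rw [hi] at hIcc
  calc dist (cyclicIter rlo rhi (k + 1) x) (cyclicIter rlo rhi (k + 1 - 1) x)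
      = dist (coordProj rlo rhi i (cyclicIter rlo rhi k x)) (cyclicIter rlo rhi k x) := rfl
    _ ≤ lam * dist (cyclicIter rlo rhi k x ∘ i.succAbove)
          (cyclicIter rlo rhi (k - (n + 1)) x ∘ i.succAbove) :=
        dist_coordProj_le rlo rhi (hlo i) (hhi i) hIcc
    _ ≤ lam * S := by gcongr
end

section
/- Let q = 0 ∈ Q where Q = { x ∈ ℓ∞^n | r̲ᵢ(x̂ᵢ) ≤ xᵢ ≤ r̄ᵢ(x̂ᵢ) for all i } with r̲ᵢ, r̄ᵢ 1-Lipschitz and r̲ᵢ ≤ r̄ᵢ. Then for every r > 0, Q ∩ B(0,r) = { x ∈ ℓ∞^n | min(max(−r, r̲ᵢ(x̂ᵢ)), r) ≤ xᵢ ≤ min(max(−r, r̄ᵢ(x̂ᵢ)), r) for all i }, i.e., the intersection of Q with the closed ball of radius r is again cut out by truncated 1-Lipschitz bounds. -/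
open Metric

/-!
A point of the ball `‖x‖ ≤ r` has every coordinate in `[-r, r]`, and, since the bounds are
1-Lipschitz and `0 ∈ Q`, it also satisfies `r̲ᵢ(x̂ᵢ) ≤ r` and `-r ≤ r̄ᵢ(x̂ᵢ)`. Under these
three conditions truncating the bounds to `[-r, r]` does not change which values of `xᵢ` they
admit. Conversely the truncated bounds force every coordinate into `[-r, r]`.
-/

section Clamp

variable {a b r t : ℝ}

lemma abs_le_of_clamp_le_of_le_clamp (hr : 0 ≤ r) (ha : min (max (-r) a) r ≤ t)
    (hb : t ≤ min (max (-r) b) r) : |t| ≤ r :=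
  abs_le.2 ⟨le_trans (le_min (le_max_left _ _) (neg_le_self hr)) ha, hb.trans (min_le_right _ _)⟩

lemma clamp_le_and_le_clamp_iff (ht : |t| ≤ r) (ha : a ≤ r) (hb : -r ≤ b) :
    min (max (-r) a) r ≤ t ∧ t ≤ min (max (-r) b) r ↔ a ≤ t ∧ t ≤ b := by
  obtain ⟨hrt, htr⟩ := abs_le.1 ht
  rw [min_eq_left (max_le (by linarith) ha), max_eq_right hb, max_le_iff, le_min_iff]
  tauto

end Clamp

namespace LipschitzWith

variable {E : Type*} [SeminormedAddCommGroup E] {f : E → ℝ} {y : E} {r : ℝ}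

lemma le_of_norm_le (hf : LipschitzWith 1 f) (hf0 : f 0 ≤ 0) (hy : ‖y‖ ≤ r) : f y ≤ r := by
  have := hf.le_add_mul y 0
  rw [NNReal.coe_one, one_mul, dist_zero_right] at this
  linarith

lemma neg_le_of_norm_le (hf : LipschitzWith 1 f) (hf0 : 0 ≤ f 0) (hy : ‖y‖ ≤ r) : -r ≤ f y := by
  have := hf.le_add_mul 0 y
  rw [NNReal.coe_one, one_mul, dist_zero_left] at this
  linarith

end LipschitzWith

theorem ball_intersection_eq_general {n : ℕ}
    (rlo rhi : Fin (n + 1) → (Fin n → ℝ) → ℝ)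
    (hlo : ∀ i, LipschitzWith 1 (rlo i)) (hhi : ∀ i, LipschitzWith 1 (rhi i))
    (h0 : (0 : Fin (n + 1) → ℝ) ∈ {x : Fin (n + 1) → ℝ | ∀ i : Fin (n + 1),
        rlo i (x ∘ i.succAbove) ≤ x i ∧ x i ≤ rhi i (x ∘ i.succAbove)})
    (r : ℝ) (hr : 0 < r) :
    {x : Fin (n + 1) → ℝ | ∀ i : Fin (n + 1),
        rlo i (x ∘ i.succAbove) ≤ x i ∧ x i ≤ rhi i (x ∘ i.succAbove)} ∩
      closedBall (0 : Fin (n + 1) → ℝ) r =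
    {x : Fin (n + 1) → ℝ | ∀ i : Fin (n + 1),
        min (max (-r) (rlo i (x ∘ i.succAbove))) r ≤ x i ∧
        x i ≤ min (max (-r) (rhi i (x ∘ i.succAbove))) r} := by
  ext x
  simp only [Set.mem_inter_iff, Set.mem_ofPred_eq, mem_closedBall_zero_iff]
  have hclamp (hx : ‖x‖ ≤ r) (i : Fin (n + 1)) :=
    have hxi : ‖x ∘ i.succAbove‖ ≤ r := (pi_norm_comp_le x _).trans hx
    clamp_le_and_le_clamp_iff ((norm_le_pi_norm x i).trans hx)
      ((hlo i).le_of_norm_le (h0 i).1 hxi) ((hhi i).neg_le_of_norm_le (h0 i).2 hxi)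
  constructor
  · rintro ⟨hQ, hx⟩ i
    exact (hclamp hx i).2 (hQ i)
  · intro h
    have hx : ‖x‖ ≤ r := (pi_norm_le_iff_of_nonneg hr.le).2 fun j =>
      abs_le_of_clamp_le_of_le_clamp hr.le (h j).1 (h j).2
    exact ⟨fun i => (hclamp hx i).1 (h i), hx⟩

/-- If `0 ∈ Q` where `Q` is cut out by 1-Lipschitz bounds `r̲ᵢ ≤ r̄ᵢ`, then for every
`r > 0` the intersection `Q ∩ B(0,r)` is cut out by the bounds truncated to `[-r, r]`. -/
theorem ball_intersection_eq {n : ℕ}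
    (rlo rhi : Fin (n + 1) → (Fin n → ℝ) → ℝ)
    (hlo : ∀ i, LipschitzWith 1 (rlo i)) (hhi : ∀ i, LipschitzWith 1 (rhi i))
    (hle : ∀ i (y : Fin n → ℝ), rlo i y ≤ rhi i y)
    (h0 : (0 : Fin (n + 1) → ℝ) ∈ {x : Fin (n + 1) → ℝ | ∀ i : Fin (n + 1),
        rlo i (x ∘ i.succAbove) ≤ x i ∧ x i ≤ rhi i (x ∘ i.succAbove)})
    (r : ℝ) (hr : 0 < r) :
    {x : Fin (n + 1) → ℝ | ∀ i : Fin (n + 1),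
        rlo i (x ∘ i.succAbove) ≤ x i ∧ x i ≤ rhi i (x ∘ i.succAbove)} ∩
      closedBall (0 : Fin (n + 1) → ℝ) r =
    {x : Fin (n + 1) → ℝ | ∀ i : Fin (n + 1),
        min (max (-r) (rlo i (x ∘ i.succAbove))) r ≤ x i ∧
        x i ≤ min (max (-r) (rhi i (x ∘ i.succAbove))) r} :=
  ball_intersection_eq_general rlo rhi hlo hhi h0 r hr
end

section
/- In ℓ∞^n, for any x ∈ ℝ^n and index i, the cone C(x,+i) = { x + b eᵢ + y | b ≥ 0, yᵢ = 0, ‖y‖ ≤ b } is contained in C(p, x) = { q | ‖p − q‖ = ‖p − x‖ + ‖x − q‖ } whenever p ∈ C(x, −i), i.e., whenever p = x − b eᵢ + y with b ≥ 0, yᵢ = 0, ‖y‖ ≤ b. -/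
/-!
Both `p - x` and `x - q` lie in the cone `{v | ‖v‖ ≤ -v i}`. On that cone the sup norm agrees
with the linear functional `v ↦ -v i`, so it is additive there, and
`‖p - q‖ = ‖(p - x) + (x - q)‖ = ‖p - x‖ + ‖x - q‖`.
-/

theorem norm_add_eq_of_norm_le_neg_apply {ι : Type*} [Fintype ι] {u v : ι → ℝ} (i : ι)
    (hu : ‖u‖ ≤ -u i) (hv : ‖v‖ ≤ -v i) : ‖u + v‖ = ‖u‖ + ‖v‖ :=
  le_antisymm (norm_add_le u v) <|
    calc ‖u‖ + ‖v‖ ≤ -(u + v) i := by simp only [Pi.add_apply]; linarith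
      _ ≤ ‖(u + v) i‖ := neg_le_abs _
      _ ≤ ‖u + v‖ := norm_le_pi_norm _ i

theorem norm_sub_smul_single_le_neg_apply {ι : Type*} [Fintype ι] [DecidableEq ι]
    {z : ι → ℝ} {c : ℝ} {i : ι} (hc : 0 ≤ c) (hzi : z i = 0) (hz : ‖z‖ ≤ c) :
    ‖z - c • (Pi.single i 1 : ι → ℝ)‖ ≤
      -(z - c • (Pi.single i 1 : ι → ℝ)) i := by
  have hi : -(z - c • (Pi.single i 1 : ι → ℝ)) i = c := by simp [hzi]
  rw [hi]
  refine (pi_norm_le_iff_of_nonneg hc).2 fun j => ?_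
  rcases eq_or_ne j i with rfl | hji
  · simp [hzi, abs_of_nonneg hc]
  · simpa [hji] using (norm_le_pi_norm z j).trans hz

/-- In `ℓ∞ⁿ`, if `p ∈ C(x,−i)`, i.e. `p = x − b' eᵢ + y'` with `b' ≥ 0`, `y'ᵢ = 0`,
`‖y'‖ ≤ b'`, then the cone `C(x,+i)` is contained in `C(p, x)`. -/
theorem cone_subset_cone {n : ℕ} (x : Fin n → ℝ) (i : Fin n)
    (p : Fin n → ℝ) (b' : ℝ) (y' : Fin n → ℝ)
    (hb' : 0 ≤ b') (hy'i : y' i = 0) (hy' : ‖y'‖ ≤ b')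
    (hp : p = x - b' • (Pi.single i 1 : Fin n → ℝ) + y') :
    {q : Fin n → ℝ | ∃ (b : ℝ) (y : Fin n → ℝ),
        0 ≤ b ∧ y i = 0 ∧ ‖y‖ ≤ b ∧ q = x + b • (Pi.single i 1 : Fin n → ℝ) + y} ⊆
    {q : Fin n → ℝ | ‖p - q‖ = ‖p - x‖ + ‖x - q‖} := by
  rintro q ⟨b, y, hb, hyi, hy, hq⟩
  have hpx : p - x = y' - b' • (Pi.single i 1 : Fin n → ℝ) := by rw [hp]; abel
  have hxq : x - q = -y - b • (Pi.single i 1 : Fin n → ℝ) := by rw [hq]; abel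
  have hpx_cone : ‖p - x‖ ≤ -(p - x) i :=
    hpx ▸ norm_sub_smul_single_le_neg_apply hb' hy'i hy'
  have hxq_cone : ‖x - q‖ ≤ -(x - q) i :=
    hxq ▸ norm_sub_smul_single_le_neg_apply hb (by simp [hyi]) (by rwa [norm_neg])
  show ‖p - q‖ = ‖p - x‖ + ‖x - q‖
  rw [← sub_add_sub_cancel p x q]
  exact norm_add_eq_of_norm_le_neg_apply i hpx_cone hxq_cone
end
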